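/- Let Ω be a compact metric space with distance ρ and let F : [0,∞) → [0,∞) be continuous. If μ₂ ∈ 𝒫(Ω) is a local minimizer of I_F in the weak-* topology and μ₁ ∈ 𝒫(Ω) satisfies supp μ₁ ⊆ supp μ₂, then I_F(μ₁) = I_F(μ₂) + I_F(μ₁ − μ₂) and, in particular, I_F(μ₁) ≥ I_F(μ₂). -/

import Mathlib

open MeasureTheory Topology Filter
open scoped ENNReal NNReal

/-- The support of a (nonnegative) Borel measure: points all of whose open
neighborhoods have positive measure. -/
def msupp {Ω : Type*} [TopologicalSpace Ω] {m : MeasurableSpace Ω}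
    (μ : Measure Ω) : Set Ω :=
  {x | ∀ U : Set Ω, IsOpen U → x ∈ U → μ U ≠ 0}

/-- The interaction energy `I_F(μ) = ∬ F(ρ(x,y)) dμ(x) dμ(y)` of a measure
with respect to a kernel `F` and a distance function `ρ`. -/
noncomputable def energy {Ω : Type*} {m : MeasurableSpace Ω}
    (F : ℝ → ℝ) (ρ : Ω → Ω → ℝ) (μ : Measure Ω) : ℝ :=
  ∫ x, ∫ y, F (ρ x y) ∂μ ∂μ

/-- The integral of a function against a finite signed measure, via the
Jordan decomposition. -/
noncomputable def sintegral {Ω : Type*} {m : MeasurableSpace Ω}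
    (ν : SignedMeasure Ω) (f : Ω → ℝ) : ℝ :=
  ∫ x, f x ∂ν.toJordanDecomposition.posPart
    - ∫ x, f x ∂ν.toJordanDecomposition.negPart

/-- The interaction energy `∬ F(ρ(x,y)) dν(x) dν(y)` of a finite signed
measure `ν`. -/
noncomputable def signedEnergy {Ω : Type*} {m : MeasurableSpace Ω}
    (F : ℝ → ℝ) (ρ : Ω → Ω → ℝ) (ν : SignedMeasure Ω) : ℝ :=
  sintegral ν (fun x => sintegral ν (fun y => F (ρ x y)))

/-- The Wasserstein `d_∞` distance: infimum over couplings `π` of `μ` and `ν`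
of the supremum of `ρ(x,y)` over the support of `π`. -/
noncomputable def dInfty {Ω : Type*} [TopologicalSpace Ω] {m : MeasurableSpace Ω}
    (ρ : Ω → Ω → ℝ) (μ ν : Measure Ω) : ℝ≥0∞ :=
  ⨅ (π : Measure (Ω × Ω)) (_ : π.map Prod.fst = μ ∧ π.map Prod.snd = ν),
    ⨆ (p : Ω × Ω) (_ : p ∈ msupp π), ENNReal.ofReal (ρ p.1 p.2)

/-!
Perturbing the local minimizer `μ₂` along the segment `(1 - t) μ₂ + t ν` makes the energy a
quadratic polynomial in `t`; local minimality forces its linear coefficient to be nonnegative, and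
its quadratic coefficient too when the linear one vanishes. For `ν` a Dirac mass at `x` this says
that the potential `ψ x = ∫ F (ρ x y) dμ₂(y)` is at least `I_F(μ₂)`; as `∫ ψ dμ₂ = I_F(μ₂)` and `ψ`
is continuous, `ψ = I_F(μ₂)` on `supp μ₂ ⊇ supp μ₁`. Hence both cross terms of `μ₁` and `μ₂` equal
`I_F(μ₂)`, which turns the bilinear expansion of `I_F(μ₁ - μ₂)` into `I_F(μ₁) - I_F(μ₂)` and makes
the linear coefficient of the segment towards `μ₁` vanish, so `I_F(μ₁ - μ₂) ≥ 0`.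
-/

open Set
open scoped unitInterval

lemma MeasureTheory.integral_ofReal_smul_add_ofReal_smul {Ω : Type*} [MeasurableSpace Ω]
    {μ ν : Measure Ω} {f : Ω → ℝ} (hμ : Integrable f μ) (hν : Integrable f ν)
    {a b : ℝ} (ha : 0 ≤ a) (hb : 0 ≤ b) :
    ∫ x, f x ∂(ENNReal.ofReal a • μ + ENNReal.ofReal b • ν)
      = a * ∫ x, f x ∂μ + b * ∫ x, f x ∂ν := by
  rw [integral_add_measure (hμ.smul_measure ENNReal.ofReal_ne_top)
      (hν.smul_measure ENNReal.ofReal_ne_top), integral_smul_measure, integral_smul_measure,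
    ENNReal.toReal_ofReal ha, ENNReal.toReal_ofReal hb, smul_eq_mul, smul_eq_mul]

namespace MeasureTheory.ProbabilityMeasure

variable {Ω : Type*} [MeasurableSpace Ω]

noncomputable def lineMap (μ ν : ProbabilityMeasure Ω) (t : I) : ProbabilityMeasure Ω :=
  ⟨ENNReal.ofReal (1 - t) • (μ : Measure Ω) + ENNReal.ofReal t • (ν : Measure Ω),
    ⟨by simp [← ENNReal.ofReal_add (sub_nonneg.2 t.2.2) t.2.1]⟩⟩

lemma coe_lineMap (μ ν : ProbabilityMeasure Ω) (t : I) :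
    (lineMap μ ν t : Measure Ω)
      = ENNReal.ofReal (1 - t) • (μ : Measure Ω) + ENNReal.ofReal t • (ν : Measure Ω) :=
  rfl

lemma lineMap_zero (μ ν : ProbabilityMeasure Ω) : lineMap μ ν 0 = μ := by
  ext1
  simp [coe_lineMap]

lemma integral_lineMap {μ ν : ProbabilityMeasure Ω} {f : Ω → ℝ}
    (hμ : Integrable f μ) (hν : Integrable f ν) (t : I) :
    ∫ x, f x ∂(lineMap μ ν t) = (1 - t) * ∫ x, f x ∂μ + t * ∫ x, f x ∂ν :=
  integral_ofReal_smul_add_ofReal_smul hμ hν (sub_nonneg.2 t.2.2) t.2.1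

lemma continuous_lineMap [TopologicalSpace Ω] [OpensMeasurableSpace Ω]
    (μ ν : ProbabilityMeasure Ω) : Continuous (lineMap μ ν) := by
  refine continuous_iff_forall_continuous_integral.2 fun f => ?_
  simp only [integral_lineMap (f.integrable _) (f.integrable _)]
  fun_prop

end MeasureTheory.ProbabilityMeasure

open MeasureTheory ProbabilityMeasure

lemma nonneg_of_eventually_nonneg_mul_add_mul_sq {a b : ℝ}
    (h : ∀ᶠ t in 𝓝[>] (0 : ℝ), 0 ≤ a * t + b * t ^ 2) : 0 ≤ a := by
  have hdiv : ∀ᶠ t in 𝓝[>] (0 : ℝ), 0 ≤ a + b * t := by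
    filter_upwards [h, self_mem_nhdsWithin] with t ht (htpos : 0 < t)
    have : a * t + b * t ^ 2 = (a + b * t) * t := by ring
    exact nonneg_of_mul_nonneg_left (this ▸ ht) htpos
  have hlim : Tendsto (fun t => a + b * t) (𝓝[>] (0 : ℝ)) (𝓝 a) := by
    simpa using ((show Continuous fun t : ℝ => a + b * t by fun_prop).tendsto 0).mono_left
      nhdsWithin_le_nhds
  exact ge_of_tendsto hlim hdiv

lemma nonneg_of_eventually_nonneg_mul_sq {b : ℝ}
    (h : ∀ᶠ t in 𝓝[>] (0 : ℝ), 0 ≤ b * t ^ 2) : 0 ≤ b := by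
  obtain ⟨t, ht, htpos⟩ := (h.and self_mem_nhdsWithin).exists
  exact nonneg_of_mul_nonneg_left ht (pow_pos htpos 2)

lemma ae_mem_msupp {Ω : Type*} [TopologicalSpace Ω] [SecondCountableTopology Ω]
    [MeasurableSpace Ω] (μ : Measure Ω) : ∀ᵐ x ∂μ, x ∈ msupp μ := by
  refine measure_null_of_locally_null _ fun x hx => ?_
  simp only [msupp, mem_compl_iff, mem_ofPred_eq, not_forall, not_not] at hx
  obtain ⟨U, hUo, hxU, hU0⟩ := hx
  exact ⟨U, mem_nhdsWithin_of_mem_nhds (hUo.mem_nhds hxU), hU0⟩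

lemma Continuous.eqOn_msupp_of_ae_eq {Ω β : Type*} [TopologicalSpace Ω] [MeasurableSpace Ω]
    [TopologicalSpace β] [T2Space β] {μ : Measure Ω} {f g : Ω → β}
    (hf : Continuous f) (hg : Continuous g) (h : f =ᵐ[μ] g) : EqOn f g (msupp μ) :=
  fun _ hx => by_contra fun hne => hx _ (isClosed_eq hf hg).isOpen_compl hne (ae_iff.1 h)

lemma Continuous.integrable_of_compactSpace {X : Type*} [TopologicalSpace X] [CompactSpace X]
    [MeasurableSpace X] [OpensMeasurableSpace X] {f : X → ℝ} (hf : Continuous f)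
    (μ : Measure X) [IsFiniteMeasure μ] : Integrable f μ :=
  hf.integrable_of_hasCompactSupport (.of_compactSpace f)

section Potential

variable {Ω : Type*} [MeasurableSpace Ω]

noncomputable def potential (F : ℝ → ℝ) (ρ : Ω → Ω → ℝ) (ν : Measure Ω) (x : Ω) : ℝ :=
  ∫ y, F (ρ x y) ∂ν

noncomputable def crossEnergy (F : ℝ → ℝ) (ρ : Ω → Ω → ℝ) (μ ν : Measure Ω) : ℝ :=
  ∫ x, potential F ρ ν x ∂μ

lemma energy_eq_crossEnergy (F : ℝ → ℝ) (ρ : Ω → Ω → ℝ) (μ : Measure Ω) :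
    energy F ρ μ = crossEnergy F ρ μ μ :=
  rfl

end Potential

section Kernel

variable {Ω : Type*} [TopologicalSpace Ω] [CompactSpace Ω] [MeasurableSpace Ω]
  [OpensMeasurableSpace Ω] {F : ℝ → ℝ} {ρ : Ω → Ω → ℝ}

lemma sintegral_toSignedMeasure_sub (μ ν : Measure Ω) [IsFiniteMeasure μ] [IsFiniteMeasure ν]
    {f : Ω → ℝ} (hf : Continuous f) :
    sintegral (μ.toSignedMeasure - ν.toSignedMeasure) f = ∫ x, f x ∂μ - ∫ x, f x ∂ν := by
  set s := μ.toSignedMeasure - ν.toSignedMeasure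
  set p := s.toJordanDecomposition.posPart
  set n := s.toJordanDecomposition.negPart
  have hpn : p + ν = n + μ := by
    rw [← Measure.toSignedMeasure_eq_toSignedMeasure_iff, Measure.toSignedMeasure_add,
      Measure.toSignedMeasure_add, add_comm n.toSignedMeasure, ← sub_eq_sub_iff_add_eq_add]
    exact s.toSignedMeasure_toJordanDecomposition
  have h := congrArg (fun κ => ∫ x, f x ∂κ) hpn
  simp only [integral_add_measure (hf.integrable_of_compactSpace _)
    (hf.integrable_of_compactSpace _)] at h
  rw [sintegral]
  linarith

variable (hK : Continuous fun p : Ω × Ω => F (ρ p.1 p.2))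
include hK

lemma continuous_potential [FirstCountableTopology Ω] (ν : Measure Ω) [IsFiniteMeasure ν] :
    Continuous (potential F ρ ν) := by
  set B := BoundedContinuousFunction.mkOfCompact ⟨_, hK⟩
  refine continuous_iff_continuousAt.2 fun x => continuousAt_of_dominated (bound := fun _ => ‖B‖)
    ?_ ?_ (integrable_const _) ?_
  · exact .of_forall fun x' => (hK.comp (Continuous.prodMk_right x')).aestronglyMeasurable
  · exact .of_forall fun x' => .of_forall fun y => B.norm_coe_le_norm (x', y)
  · exact .of_forall fun y => (hK.comp (continuous_id.prodMk continuous_const)).continuousAt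

lemma potential_lineMap (μ ν : ProbabilityMeasure Ω) (t : I) :
    potential F ρ (lineMap μ ν t) = fun x => (1 - t) * potential F ρ μ x + t * potential F ρ ν x :=
  funext fun x =>
    have hKx := hK.comp (Continuous.prodMk_right x)
    integral_lineMap (hKx.integrable_of_compactSpace _) (hKx.integrable_of_compactSpace _) t

lemma crossEnergy_lineMap_left [FirstCountableTopology Ω] (μ ν : ProbabilityMeasure Ω) (t : I)
    (κ : Measure Ω) [IsFiniteMeasure κ] :
    crossEnergy F ρ (lineMap μ ν t) κ
      = (1 - t) * crossEnergy F ρ μ κ + t * crossEnergy F ρ ν κ :=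
  integral_lineMap ((continuous_potential hK κ).integrable_of_compactSpace _)
    ((continuous_potential hK κ).integrable_of_compactSpace _) t

lemma crossEnergy_lineMap_right [FirstCountableTopology Ω] (κ : Measure Ω) [IsFiniteMeasure κ]
    (μ ν : ProbabilityMeasure Ω) (t : I) :
    crossEnergy F ρ κ (lineMap μ ν t)
      = (1 - t) * crossEnergy F ρ κ μ + t * crossEnergy F ρ κ ν := by
  have hμ := (continuous_potential hK μ).integrable_of_compactSpace κ
  have hν := (continuous_potential hK ν).integrable_of_compactSpace κ
  rw [crossEnergy, potential_lineMap hK, integral_add (hμ.const_mul _) (hν.const_mul _),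
    integral_const_mul, integral_const_mul, crossEnergy, crossEnergy]

lemma crossEnergy_comm [SecondCountableTopology Ω] (hρ : ∀ x y, ρ x y = ρ y x)
    (μ ν : Measure Ω) [IsFiniteMeasure μ] [IsFiniteMeasure ν] :
    crossEnergy F ρ μ ν = crossEnergy F ρ ν μ := by
  simp only [crossEnergy, potential]
  rw [integral_integral_swap (hK.integrable_of_compactSpace _)]
  simp only [hρ]

lemma energy_lineMap [SecondCountableTopology Ω] (hρ : ∀ x y, ρ x y = ρ y x)
    (μ ν : ProbabilityMeasure Ω) (t : I) :
    energy F ρ (lineMap μ ν t) = (1 - t) ^ 2 * energy F ρ μ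
      + 2 * t * (1 - t) * crossEnergy F ρ ν μ + t ^ 2 * energy F ρ ν := by
  simp only [energy_eq_crossEnergy, crossEnergy_lineMap_left hK, crossEnergy_lineMap_right hK,
    crossEnergy_comm hK hρ (μ : Measure Ω) ν]
  ring

lemma signedEnergy_toSignedMeasure_sub [FirstCountableTopology Ω] (μ ν : Measure Ω)
    [IsFiniteMeasure μ] [IsFiniteMeasure ν] :
    signedEnergy F ρ (μ.toSignedMeasure - ν.toSignedMeasure)
      = energy F ρ μ - crossEnergy F ρ μ ν - crossEnergy F ρ ν μ + energy F ρ ν := by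
  have hμ := continuous_potential hK μ
  have hν := continuous_potential hK ν
  have hinner : (fun x => sintegral (μ.toSignedMeasure - ν.toSignedMeasure) fun y => F (ρ x y))
      = fun x => potential F ρ μ x - potential F ρ ν x :=
    funext fun x => sintegral_toSignedMeasure_sub μ ν (hK.comp (Continuous.prodMk_right x))
  rw [signedEnergy, hinner,
    sintegral_toSignedMeasure_sub μ ν (f := fun x => potential F ρ μ x - potential F ρ ν x)
      (hμ.sub hν),
    integral_sub (hμ.integrable_of_compactSpace _) (hν.integrable_of_compactSpace _),
    integral_sub (hμ.integrable_of_compactSpace _) (hν.integrable_of_compactSpace _)]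
  simp only [energy_eq_crossEnergy, crossEnergy]
  ring

section LocalMin

variable [SecondCountableTopology Ω] (hρ : ∀ x y, ρ x y = ρ y x) {μ : ProbabilityMeasure Ω}
  (hmin : IsLocalMin (fun ν : ProbabilityMeasure Ω => energy F ρ ν) μ)
include hρ hmin

lemma IsLocalMin.eventually_energy_variation_nonneg (ν : ProbabilityMeasure Ω) :
    ∀ᶠ t in 𝓝[>] (0 : ℝ), 0 ≤ 2 * (crossEnergy F ρ ν μ - energy F ρ μ) * t
      + (energy F ρ μ - 2 * crossEnergy F ρ ν μ + energy F ρ ν) * t ^ 2 := by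
  set path : ℝ → ProbabilityMeasure Ω := fun t => lineMap μ ν (projIcc 0 1 zero_le_one t)
  have hpath : Continuous path := (continuous_lineMap μ ν).comp continuous_projIcc
  have hpath0 : path 0 = μ := by
    simp only [path, projIcc_left]
    exact lineMap_zero μ ν
  have hloc : IsLocalMin (fun t => energy F ρ (path t)) 0 :=
    (hpath0 ▸ hmin).comp_continuous hpath.continuousAt
  filter_upwards [hloc.filter_mono nhdsWithin_le_nhds, Ioo_mem_nhdsGT one_pos]
    with t ht ⟨ht0, ht1⟩
  simp only [path, projIcc_of_mem _ ⟨ht0.le, ht1.le⟩, hpath0] at ht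
  rw [energy_lineMap hK hρ] at ht
  linarith

lemma IsLocalMin.energy_le_crossEnergy (ν : ProbabilityMeasure Ω) :
    energy F ρ μ ≤ crossEnergy F ρ ν μ := by
  have := nonneg_of_eventually_nonneg_mul_add_mul_sq
    (hmin.eventually_energy_variation_nonneg hK hρ ν)
  linarith

lemma IsLocalMin.energy_le_of_crossEnergy_eq {ν : ProbabilityMeasure Ω}
    (h : crossEnergy F ρ ν μ = energy F ρ μ) : energy F ρ μ ≤ energy F ρ ν := by
  have := nonneg_of_eventually_nonneg_mul_sq
    ((hmin.eventually_energy_variation_nonneg hK hρ ν).mono fun t ht => by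
      simpa only [h, sub_self, mul_zero, zero_mul, zero_add] using ht)
  linarith

lemma IsLocalMin.energy_le_potential (x : Ω) : energy F ρ μ ≤ potential F ρ μ x := by
  have := hmin.energy_le_crossEnergy hK hρ ⟨Measure.dirac x, inferInstance⟩
  change _ ≤ ∫ y, potential F ρ μ y ∂(Measure.dirac x) at this
  rwa [integral_dirac' _ _ (continuous_potential hK μ).stronglyMeasurable] at this

lemma IsLocalMin.potential_eqOn_msupp :
    EqOn (potential F ρ μ) (fun _ => energy F ρ μ) (msupp (μ : Measure Ω)) := by
  have hcont := continuous_potential hK μ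
  refine hcont.eqOn_msupp_of_ae_eq continuous_const ?_
  have hint : ∫ x, (potential F ρ μ x - energy F ρ μ) ∂μ = 0 := by
    rw [integral_sub (hcont.integrable_of_compactSpace _) (integrable_const _), integral_const]
    simp [energy_eq_crossEnergy, crossEnergy]
  filter_upwards [(integral_eq_zero_iff_of_nonneg
    (fun x => sub_nonneg.2 (hmin.energy_le_potential hK hρ x))
    ((hcont.sub continuous_const).integrable_of_compactSpace _)).1 hint] with x hx
  exact sub_eq_zero.1 hx

lemma IsLocalMin.crossEnergy_eq_energy {ν : ProbabilityMeasure Ω}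
    (hsupp : msupp (ν : Measure Ω) ⊆ msupp (μ : Measure Ω)) :
    crossEnergy F ρ ν μ = energy F ρ μ := by
  have : potential F ρ μ =ᵐ[(ν : Measure Ω)] fun _ => energy F ρ μ :=
    (ae_mem_msupp (ν : Measure Ω)).mono fun x hx => hmin.potential_eqOn_msupp hK hρ (hsupp hx)
  rw [crossEnergy, integral_congr_ae this, integral_const]
  simp

end LocalMin

end Kernel

theorem stmt_6_general {Ω : Type*} [MetricSpace Ω] [CompactSpace Ω]
    [MeasurableSpace Ω] [BorelSpace Ω]
    (F : ℝ → ℝ) (hF_cont : ContinuousOn F (Set.Ici 0))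
    (μ₁ μ₂ : ProbabilityMeasure Ω)
    (hmin₂ : ∃ U ∈ 𝓝 μ₂, ∀ μ ∈ U,
      energy F dist (μ₂ : Measure Ω) ≤ energy F dist (μ : Measure Ω))
    (hsupp : msupp (μ₁ : Measure Ω) ⊆ msupp (μ₂ : Measure Ω)) :
    energy F dist (μ₁ : Measure Ω) =
      energy F dist (μ₂ : Measure Ω) +
        signedEnergy F dist
          ((μ₁ : Measure Ω).toSignedMeasure - (μ₂ : Measure Ω).toSignedMeasure) ∧
    energy F dist (μ₂ : Measure Ω) ≤ energy F dist (μ₁ : Measure Ω) := by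
  have hK : Continuous fun p : Ω × Ω => F (dist p.1 p.2) :=
    hF_cont.comp_continuous continuous_dist fun p => dist_nonneg
  obtain ⟨U, hU, hle⟩ := hmin₂
  have hmin : IsLocalMin (fun μ : ProbabilityMeasure Ω => energy F dist (μ : Measure Ω)) μ₂ :=
    eventually_of_mem hU hle
  have hcross := hmin.crossEnergy_eq_energy hK dist_comm hsupp
  have hdecomp : signedEnergy F dist
      ((μ₁ : Measure Ω).toSignedMeasure - (μ₂ : Measure Ω).toSignedMeasure)
        = energy F dist (μ₁ : Measure Ω) - energy F dist (μ₂ : Measure Ω) := by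
    rw [signedEnergy_toSignedMeasure_sub hK, crossEnergy_comm hK dist_comm (μ₂ : Measure Ω) μ₁,
      hcross]
    ring
  exact ⟨by rw [hdecomp]; ring, hmin.energy_le_of_crossEnergy_eq hK dist_comm hcross⟩

/-- energy decomposition along a local minimizer.
If `μ₂` is a local weak-* minimizer of `I_F` and `supp μ₁ ⊆ supp μ₂`, then
`I_F(μ₁) = I_F(μ₂) + I_F(μ₁ − μ₂)`; in particular `I_F(μ₁) ≥ I_F(μ₂)`. -/
theorem stmt_6 {Ω : Type*} [MetricSpace Ω] [CompactSpace Ω]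
    [MeasurableSpace Ω] [BorelSpace Ω]
    (F : ℝ → ℝ) (hF_cont : ContinuousOn F (Set.Ici 0))
    (hF_nonneg : ∀ t ∈ Set.Ici (0 : ℝ), 0 ≤ F t)
    (μ₁ μ₂ : ProbabilityMeasure Ω)
    (hmin₂ : ∃ U ∈ 𝓝 μ₂, ∀ μ ∈ U,
      energy F dist (μ₂ : Measure Ω) ≤ energy F dist (μ : Measure Ω))
    (hsupp : msupp (μ₁ : Measure Ω) ⊆ msupp (μ₂ : Measure Ω)) :
    energy F dist (μ₁ : Measure Ω) =
      energy F dist (μ₂ : Measure Ω) +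
        signedEnergy F dist
          ((μ₁ : Measure Ω).toSignedMeasure - (μ₂ : Measure Ω).toSignedMeasure) ∧
    energy F dist (μ₂ : Measure Ω) ≤ energy F dist (μ₁ : Measure Ω) :=
  stmt_6_general F hF_cont μ₁ μ₂ hmin₂ hsupp
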